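/- arXiv:0906.3945 — 6 statements merged into one kernel-verified Lean document; each statement's English description precedes it below -/
import Mathlib

section
/- A completely free mean-field solution ($\bar q = 1 - p/\mu$, $\bar\chi = 0$, all nodes uncongested) exists on an uncorrelated random graph with maximum degree $k_{max}$ if and only if $p \le p_{c_0}$, where $p_{c_0} = \frac{\mu}{\mu + (1-\mu)\,k_{max}/z}$. In particular $p_{c_0}$ does not depend on the rejection probability $\bar\eta$. -/
/-- A completely free mean-field solution (`q̄ = 1 - p/μ`, `χ̄ = 0`,
all nodes uncongested, i.e. `a_{k_max} ≤ 1`) exists iff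
`p ≤ p_{c₀} = μ / (μ + (1-μ) k_max / z)`; in particular `p_{c₀}` does not depend
on the rejection probability `η̄`. -/
theorem completely_free_solution_iff
    (p μ z kmax : ℝ) (hp : 0 < p) (hμ0 : 0 < μ) (hμ1 : μ < 1)
    (hz : 0 < z) (hk : 0 < kmax) :
    (p + (1 - μ) * (kmax / z) * (p / μ) ≤ 1)
      ↔ p ≤ μ / (μ + (1 - μ) * kmax / z) := by
  have h1 : (0:ℝ) < 1 - μ := by linarith
  have hD : 0 < μ + (1 - μ) * kmax / z := by positivity
  rw [le_div_iff₀ hD]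
  have e1 : (1 - μ) * (kmax / z) * (p / μ) * (μ * z) = (1 - μ) * kmax * p := by
    field_simp
  have e2 : p * (μ + (1 - μ) * kmax / z) * z = p * μ * z + p * ((1 - μ) * kmax) := by
    field_simp
  have hμz : 0 < μ * z := mul_pos hμ0 hz
  constructor <;> intro h <;> nlinarith [mul_le_mul_of_nonneg_right h hμz.le, mul_le_mul_of_nonneg_right h hz.le]
end

section
/- On a scale-free random network the mean-field critical creation rate satisfies $p_{c_0} = \frac{\mu}{\mu + (1-\mu)k_{max}/z}$ with $k_{max} \sim \kappa N^{1/\omega}$; hence $p_{c_0} \to 0$ as $N \to \infty$, and asymptotically $p_{c_0} \sim \frac{\mu z}{(1-\mu)\kappa} N^{-1/\omega}$. -/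
open Filter Topology

/-- On a scale-free network with `k_max = κ N^{1/ω}`, the mean-field
critical rate `p_{c₀}(N) = μ/(μ + (1-μ) k_max/z)` tends to `0` as `N → ∞`, and
asymptotically `p_{c₀}(N) ∼ (μ z / ((1-μ)κ)) N^{-1/ω}` (ratio tending to 1). -/
theorem critical_rate_vanishes_scale_free
    (μ z κ ω : ℝ) (hμ0 : 0 < μ) (hμ1 : μ < 1) (hz : 0 < z) (hκ : 0 < κ)
    (hω : 0 < ω)
    (pc : ℕ → ℝ)
    (hpc : ∀ N : ℕ, pc N = μ / (μ + (1 - μ) * (κ * (N : ℝ) ^ (1 / ω)) / z)) :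
    Tendsto pc atTop (𝓝 0)
    ∧ Tendsto (fun N : ℕ =>
        pc N / (μ * z / ((1 - μ) * κ) * (N : ℝ) ^ (-(1 / ω))))
        atTop (𝓝 1) := by
  have hμ1' : 0 < 1 - μ := by linarith
  have hc : 0 < (1 - μ) * κ / z := by positivity
  have ht : Tendsto (fun N : ℕ => (N : ℝ) ^ (1 / ω)) atTop atTop :=
    (tendsto_rpow_atTop (by positivity)).comp tendsto_natCast_atTop_atTop
  have hct : Tendsto (fun N : ℕ => (1 - μ) * κ / z * (N : ℝ) ^ (1 / ω)) atTop atTop :=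
    ht.const_mul_atTop hc
  have hden : Tendsto (fun N : ℕ => μ + (1 - μ) * (κ * (N : ℝ) ^ (1 / ω)) / z) atTop atTop := by
    have := tendsto_atTop_add_const_left atTop μ hct
    refine this.congr fun N => by ring
  constructor
  · have h1 : Tendsto (fun N : ℕ =>
        μ * (μ + (1 - μ) * (κ * (N : ℝ) ^ (1 / ω)) / z)⁻¹) atTop (𝓝 (μ * 0)) :=
      hden.inv_tendsto_atTop.const_mul μ
    rw [mul_zero] at h1
    refine h1.congr fun N => by rw [hpc N]; exact (div_eq_mul_inv _ _).symm
  · have h2 : Tendsto (fun N : ℕ =>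
        (1 + μ * ((1 - μ) * κ / z * (N : ℝ) ^ (1 / ω))⁻¹)⁻¹) atTop (𝓝 ((1 + μ * 0)⁻¹)) := by
      exact (((hct.inv_tendsto_atTop).const_mul μ).const_add 1).inv₀ (by norm_num)
    rw [mul_zero, add_zero, inv_one] at h2
    refine h2.congr' ?_
    filter_upwards [eventually_ge_atTop 1] with N hN
    have hNpos : (0 : ℝ) < (N : ℝ) := by exact_mod_cast Nat.pos_of_ne_zero (by omega)
    have hpow : (0 : ℝ) < (N : ℝ) ^ (1 / ω) := Real.rpow_pos_of_pos hNpos _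
    have hneg : (N : ℝ) ^ (-(1 / ω)) = ((N : ℝ) ^ (1 / ω))⁻¹ := Real.rpow_neg hNpos.le _ ▸ rfl
    rw [hpc N, hneg]
    have hden' : 0 < μ + (1 - μ) * (κ * (N : ℝ) ^ (1 / ω)) / z := by positivity
    field_simp
    ring
end

section
/- In the mean-field free phase with $n^* \to \infty$ and all nodes uncongested ($\bar\chi = 0$, $1 - \bar q = p/\mu$), the average particle density $\nu(p) = \sum_k P(k) \frac{a_k}{1-a_k}$ with $a_k = p + (1-\mu)\frac{k}{z}\frac{p}{\mu}$ is finite and strictly increasing for $0 < p < p_c = \frac{\mu}{\mu + (1-\mu)k_{max}/z}$, and diverges to $+\infty$ as $p \to p_c^-$. -/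
/-!
Writing `a_k(p) = p c_k` with `c_k = 1 + (1 - μ) k / (μ z)`, every summand of `ν` is
`P(k) g(p c_k)` for the increasing map `g x = x / (1 - x) = (1 - x)⁻¹ - 1` on `x < 1`. The slopes
`c_k` are largest at `k_max`, and `p_c = 1 / c_{k_max}`, so on `(0, p_c)` all arguments lie in
`[0, 1)`: the sum is increasing (strictly, through the `k_max` term with `P(k_max) > 0`), every
summand is nonnegative, and the `k_max` summand alone blows up since `p c_{k_max} → 1⁻`.
-/

open Filter Topology Set

lemma div_one_sub_eq_inv_sub_one {x : ℝ} (hx : x ≠ 1) : x / (1 - x) = (1 - x)⁻¹ - 1 := by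
  have : 1 - x ≠ 0 := sub_ne_zero.mpr hx.symm
  field_simp
  ring

lemma strictMonoOn_div_one_sub : StrictMonoOn (fun x : ℝ => x / (1 - x)) (Iio 1) := by
  intro x hx y hy hxy
  simp only [div_one_sub_eq_inv_sub_one hx.ne, div_one_sub_eq_inv_sub_one hy.ne]
  have hy' : 0 < 1 - y := sub_pos.mpr hy
  gcongr

lemma tendsto_div_one_sub_nhdsLT_one :
    Tendsto (fun x : ℝ => x / (1 - x)) (𝓝[<] 1) atTop := by
  have h1x : Tendsto (fun x : ℝ => 1 - x) (𝓝[<] 1) (𝓝[>] 0) := by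
    have := ((continuous_const.sub continuous_id).tendsto' (1 : ℝ) 0 (sub_self 1)).mono_left
      (nhdsWithin_le_nhds (s := Iio 1))
    refine tendsto_nhdsWithin_iff.mpr ⟨this, ?_⟩
    filter_upwards [self_mem_nhdsWithin] with x hx using sub_pos.mpr (mem_Iio.mp hx)
  refine (tendsto_atTop_add_const_right _ (-1) (tendsto_inv_nhdsGT_zero.comp h1x)).congr' ?_
  filter_upwards [self_mem_nhdsWithin] with x hx
  rw [Function.comp_apply, div_one_sub_eq_inv_sub_one (ne_of_lt hx)]
  ring

lemma mul_mem_Ico_of_mem_Ioo_inv {p s t : ℝ} (hp : p ∈ Ioo 0 t⁻¹) (hs : 0 ≤ s) (hst : s ≤ t) :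
    p * s ∈ Ico 0 1 := by
  have ht : 0 < t := inv_pos.mp (hp.1.trans hp.2)
  refine ⟨mul_nonneg hp.1.le hs, ?_⟩
  calc p * s ≤ p * t := mul_le_mul_of_nonneg_left hst hp.1.le
    _ < t⁻¹ * t := mul_lt_mul_of_pos_right hp.2 ht
    _ = 1 := inv_mul_cancel₀ ht.ne'

section LinearLoads

variable {ι : Type*} {D : Finset ι} {w s : ι → ℝ} {m : ι}

lemma strictMonoOn_sum_mul_div_one_sub (hw : ∀ k ∈ D, 0 ≤ w k)
    (hs : ∀ k ∈ D, 0 ≤ s k ∧ s k ≤ s m) (hm : m ∈ D) (hwm : 0 < w m) (hsm : 0 < s m) :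
    StrictMonoOn (fun p => ∑ k ∈ D, w k * (p * s k / (1 - p * s k))) (Ioo 0 (s m)⁻¹) := by
  intro p hp q hq hpq
  refine Finset.sum_lt_sum (fun k hk => ?_) ⟨m, hm, ?_⟩
  · refine mul_le_mul_of_nonneg_left ?_ (hw k hk)
    exact strictMonoOn_div_one_sub.monotoneOn
      (mul_mem_Ico_of_mem_Ioo_inv hp (hs k hk).1 (hs k hk).2).2
      (mul_mem_Ico_of_mem_Ioo_inv hq (hs k hk).1 (hs k hk).2).2
      (mul_le_mul_of_nonneg_right hpq.le (hs k hk).1)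
  · refine mul_lt_mul_of_pos_left ?_ hwm
    exact strictMonoOn_div_one_sub (mul_mem_Ico_of_mem_Ioo_inv hp hsm.le le_rfl).2
      (mul_mem_Ico_of_mem_Ioo_inv hq hsm.le le_rfl).2 (mul_lt_mul_of_pos_right hpq hsm)

lemma tendsto_sum_mul_div_one_sub (hw : ∀ k ∈ D, 0 ≤ w k)
    (hs : ∀ k ∈ D, 0 ≤ s k ∧ s k ≤ s m) (hm : m ∈ D) (hwm : 0 < w m) (hsm : 0 < s m) :
    Tendsto (fun p => ∑ k ∈ D, w k * (p * s k / (1 - p * s k)))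
      (𝓝[Ioo 0 (s m)⁻¹] (s m)⁻¹) atTop := by
  have hload : Tendsto (fun p => p * s m) (𝓝[Ioo 0 (s m)⁻¹] (s m)⁻¹) (𝓝[<] 1) := by
    refine tendsto_nhdsWithin_iff.mpr ⟨?_, ?_⟩
    · have := (continuous_id.mul continuous_const).tendsto' (s m)⁻¹ 1 (inv_mul_cancel₀ hsm.ne')
      exact this.mono_left nhdsWithin_le_nhds
    · filter_upwards [self_mem_nhdsWithin] with p hp
      exact (mul_mem_Ico_of_mem_Ioo_inv hp hsm.le le_rfl).2
  refine tendsto_atTop_mono' _ ?_ ((tendsto_div_one_sub_nhdsLT_one.comp hload).const_mul_atTop hwm)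
  filter_upwards [self_mem_nhdsWithin] with p hp
  refine Finset.single_le_sum (f := fun k => w k * (p * s k / (1 - p * s k))) (fun k hk => ?_) hm
  obtain ⟨h0, h1⟩ := mul_mem_Ico_of_mem_Ioo_inv hp (hs k hk).1 (hs k hk).2
  exact mul_nonneg (hw k hk) (div_nonneg h0 (sub_pos.mpr h1).le)

end LinearLoads

theorem density_diverges_at_transition_general
    (D : Finset ℕ) (hD : D.Nonempty) (P : ℕ → ℝ) (μ z : ℝ)
    (hμ0 : 0 < μ) (hμ1 : μ < 1) (hz : 0 < z)
    (hPpos : ∀ k ∈ D, 0 ≤ P k) (hPmax : 0 < P (D.max' hD))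
    (a : ℕ → ℝ → ℝ) (ha : ∀ k p, a k p = p + (1 - μ) * ((k : ℝ) / z) * (p / μ))
    (ν : ℝ → ℝ) (hν : ∀ p, ν p = ∑ k ∈ D, P k * (a k p / (1 - a k p)))
    (pc : ℝ) (hpc : pc = μ / (μ + (1 - μ) * ((D.max' hD : ℝ) / z))) :
    StrictMonoOn ν (Set.Ioo 0 pc)
    ∧ Tendsto ν (𝓝[Set.Ioo 0 pc] pc) atTop := by
  set M := D.max' hD
  set c : ℕ → ℝ := fun k => 1 + (1 - μ) / μ * ((k : ℝ) / z)
  have hc : ∀ k ∈ D, 0 ≤ c k ∧ c k ≤ c M := fun k hk =>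
    have : 0 ≤ (1 - μ) / μ := div_nonneg (sub_pos.mpr hμ1).le hμ0.le
    ⟨by positivity, by simp only [c]; gcongr; exact D.le_max' k hk⟩
  have hcM : 0 < c M := by positivity
  have hν' : ν = fun p => ∑ k ∈ D, P k * (p * c k / (1 - p * c k)) := by
    have hac : ∀ k p, a k p = p * c k := fun k p => by rw [ha]; simp only [c]; field_simp
    exact funext fun p => by simp only [hν, hac]
  have hpc' : pc = (c M)⁻¹ := by rw [hpc]; simp only [c]; field_simp
  rw [hν', hpc']
  exact ⟨strictMonoOn_sum_mul_div_one_sub hPpos hc (D.max'_mem hD) hPmax hcM,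
    tendsto_sum_mul_div_one_sub hPpos hc (D.max'_mem hD) hPmax hcM⟩

/-- In the mean-field free phase (`n* → ∞`, `χ̄ = 0`,
`1 - q̄ = p/μ`), the particle density `ν(p) = Σ_k P(k) a_k/(1-a_k)` with
`a_k = p + (1-μ)(k/z)(p/μ)` is strictly increasing on `(0, p_c)` and diverges
as `p → p_c⁻`, where `p_c = μ/(μ + (1-μ) k_max/z)`. -/
theorem density_diverges_at_transition
    (D : Finset ℕ) (hD : D.Nonempty) (P : ℕ → ℝ) (μ z : ℝ)
    (hμ0 : 0 < μ) (hμ1 : μ < 1) (hz : 0 < z)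
    (hPpos : ∀ k ∈ D, 0 ≤ P k) (hPmax : 0 < P (D.max' hD))
    (hPsum : ∑ k ∈ D, P k = 1)
    (a : ℕ → ℝ → ℝ) (ha : ∀ k p, a k p = p + (1 - μ) * ((k : ℝ) / z) * (p / μ))
    (ν : ℝ → ℝ) (hν : ∀ p, ν p = ∑ k ∈ D, P k * (a k p / (1 - a k p)))
    (pc : ℝ) (hpc : pc = μ / (μ + (1 - μ) * ((D.max' hD : ℝ) / z))) :
    StrictMonoOn ν (Set.Ioo 0 pc)
    ∧ Tendsto ν (𝓝[Set.Ioo 0 pc] pc) atTop :=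
  density_diverges_at_transition_general D hD P μ z hμ0 hμ1 hz hPpos hPmax a ha ν hν pc hpc
end

section
/- Consider a conserved Misanthrope-type process on a finite graph with hop rate from node $i$ to a uniformly chosen neighbor $j$ equal to $u_{ij}(n_i,n_j) = \frac{r_i}{k_i}[1 - \eta(n_j)]$ for $n_i \ge 1$, where $\eta: \mathbb{N} \to [0,1)$ with $\eta(0)=0$. Then the product measure $\mathcal{P}(n_1,\dots,n_N) \propto \prod_i \mathcal{P}_i(n_i)$ with $\mathcal{P}_i(n) = \mathcal{P}_i(0)\left(\frac{k_i}{A r_i}\right)^n \prod_{\ell=1}^n [1-\eta(\ell-1)]$ satisfies detailed balance for any constant $A > 0$, i.e. $u_{ij}(n_i+1, n_j-1)\mathcal{P}_i(n_i+1)\mathcal{P}_j(n_j-1) = u_{ji}(n_j,n_i)\mathcal{P}_i(n_i)\mathcal{P}_j(n_j)$ for all edges $(i,j)$ and all $n_i \ge 0$, $n_j \ge 1$. -/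
/-- For the conserved Misanthrope-type process with hop rates
`u_{ij}(n_i,n_j) = (r_i/k_i)(1-η(n_j))`, the product measure with marginals
`P_i(n) = P_i(0) (k_i/(A r_i))ⁿ ∏_{ℓ=1}^n (1-η(ℓ-1))` satisfies detailed
balance along every edge, for any constant `A > 0`. -/
theorem conserved_model_detailed_balance
    {V : Type*} [Fintype V] (G : SimpleGraph V)
    (k : V → ℕ) (hk : ∀ i, 1 ≤ k i)
    (r : V → ℝ) (hr : ∀ i, 0 < r i)
    (η : ℕ → ℝ) (hη0 : ∀ n, 0 ≤ η n) (hη1 : ∀ n, η n < 1) (hηz : η 0 = 0)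
    (A : ℝ) (hA : 0 < A)
    (P0 : V → ℝ) (hP0 : ∀ i, 0 < P0 i)
    (u : V → V → ℕ → ℕ → ℝ)
    (hu : ∀ i j ni nj, u i j ni nj = r i / (k i : ℝ) * (1 - η nj))
    (P : V → ℕ → ℝ)
    (hP : ∀ i n, P i n = P0 i * ((k i : ℝ) / (A * r i)) ^ n
        * ∏ ℓ ∈ Finset.range n, (1 - η ℓ)) :
    ∀ i j : V, G.Adj i j → ∀ ni nj : ℕ, 1 ≤ nj →
      u i j (ni + 1) (nj - 1) * P i (ni + 1) * P j (nj - 1)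
        = u j i nj ni * P i ni * P j nj := by
  intro i j _ ni nj hnj
  obtain ⟨m, rfl⟩ : ∃ m, nj = m + 1 := ⟨nj - 1, (Nat.succ_pred_eq_of_pos hnj).symm⟩
  simp only [Nat.add_sub_cancel, hu, hP, pow_succ, Finset.prod_range_succ]
  have hki : (k i : ℝ) ≠ 0 := Nat.cast_ne_zero.mpr (by have := hk i; omega)
  have hkj : (k j : ℝ) ≠ 0 := Nat.cast_ne_zero.mpr (by have := hk j; omega)
  have hri := (hr i).ne'
  have hrj := (hr j).ne'
  field_simp
end

section
/- The hop rates $u_{ij}(n_i, n_j) = \frac{r_i}{k_i}[1-\eta_j(n_j)]$ satisfy the factorization compatibility condition $u_{ij}(n_i+1, n_j-1)\,\frac{u_{ij}(1,0)}{u_{ji}(1,0)}\,\frac{u_{ji}(1,n_i)\,u_{ji}(n_j,0)}{u_{ij}(n_i+1,0)\,u_{ij}(1,n_j-1)} = u_{ji}(n_j, n_i)$ for all $n_i \ge 0$, $n_j \ge 1$. -/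
/-- The hop rates `u_{ij}(n_i,n_j) = (r_i/k_i)(1-η_j(n_j))`
satisfy the factorization compatibility condition
`u_{ij}(n_i+1,n_j-1) · (u_{ij}(1,0)/u_{ji}(1,0)) ·
 (u_{ji}(1,n_i) u_{ji}(n_j,0)) / (u_{ij}(n_i+1,0) u_{ij}(1,n_j-1)) = u_{ji}(n_j,n_i)`
for all `n_i ≥ 0`, `n_j ≥ 1`. -/
theorem factorization_compatibility_condition
    (ri rj : ℝ) (hri : 0 < ri) (hrj : 0 < rj)
    (ki kj : ℕ) (hki : 1 ≤ ki) (hkj : 1 ≤ kj)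
    (ηi ηj : ℕ → ℝ)
    (hηi0 : ∀ n, 0 ≤ ηi n) (hηi1 : ∀ n, ηi n < 1)
    (hηj0 : ∀ n, 0 ≤ ηj n) (hηj1 : ∀ n, ηj n < 1)
    (hηiz : ηi 0 = 0) (hηjz : ηj 0 = 0)
    (uij uji : ℕ → ℕ → ℝ)
    (huij : ∀ ni nj, uij ni nj = ri / (ki : ℝ) * (1 - ηj nj))
    (huji : ∀ nj ni, uji nj ni = rj / (kj : ℝ) * (1 - ηi ni)) :
    ∀ ni nj : ℕ, 1 ≤ nj →
      uij (ni + 1) (nj - 1) * (uij 1 0 / uji 1 0)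
        * (uji 1 ni * uji nj 0) / (uij (ni + 1) 0 * uij 1 (nj - 1))
        = uji nj ni := by
  intro ni nj hnj
  have hki' : (0:ℝ) < ki := by exact_mod_cast hki
  have hkj' : (0:ℝ) < kj := by exact_mod_cast hkj
  have h1 : (0:ℝ) < 1 - ηi ni := by linarith [hηi1 ni]
  have h2 : (0:ℝ) < 1 - ηj (nj - 1) := by linarith [hηj1 (nj - 1)]
  simp only [huij, huji, hηiz, hηjz]
  field_simp
end

section
/- Jackson's theorem for the traffic model without rejection: consider the open network where particles enter node $i$ at rate $p_i$, a nonempty node $i$ emits its top particle at rate $r_i$, the particle moves to neighbor $j$ with probability $W_{ij}$ and is then absorbed with probability $\mu_j$ or joins queue $j$ otherwise. If the linear system $\lambda_i = p_i + (1-\mu_i)\sum_j \lambda_j W_{ji}$ admits a solution with $0 < \lambda_i < r_i$ for all $i$, then the product measure $\mathcal{P}(n_1,\dots,n_N) = \prod_i (1 - \lambda_i/r_i)(\lambda_i/r_i)^{n_i}$ is a stationary distribution of the Markov process. -/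
variable {V : Type*} [Fintype V] [DecidableEq V]

/-- Remove one particle from the queue of node `i`. -/
def decQ (n : V → ℕ) (i : V) : V → ℕ := Function.update n i (n i - 1)

/-- Add one particle to the queue of node `i`. -/
def incQ (n : V → ℕ) (i : V) : V → ℕ := Function.update n i (n i + 1)

/-- Jackson's theorem for the traffic model without rejection:
if the traffic equations `λ_i = p_i + (1-μ_i) Σ_j λ_j W_{ji}` admit a solution
with `0 < λ_i < r_i`, then the product of geometric measures
`P(n) = ∏_i (1-λ_i/r_i)(λ_i/r_i)^{n_i}` satisfies the master-equation
(global balance) stationarity condition. -/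
theorem jackson_product_measure_stationary
    (W : V → V → ℝ) (hW0 : ∀ i j, 0 ≤ W i j) (hW1 : ∀ i, ∑ j, W i j = 1)
    (p r μ lam : V → ℝ)
    (hp : ∀ i, 0 < p i) (hr : ∀ i, 0 < r i)
    (hμ0 : ∀ i, 0 < μ i) (hμ1 : ∀ i, μ i ≤ 1)
    (hlam : ∀ i, lam i = p i + (1 - μ i) * ∑ j, lam j * W j i)
    (hlam0 : ∀ i, 0 < lam i) (hlamr : ∀ i, lam i < r i)
    (P : (V → ℕ) → ℝ)
    (hP : ∀ n, P n = ∏ i, (1 - lam i / r i) * (lam i / r i) ^ n i) :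
    ∀ n : V → ℕ,
      (∑ i, p i + ∑ i ∈ Finset.univ.filter fun i => 0 < n i, r i) * P n
        = (∑ i, if 0 < n i then p i * P (decQ n i) else 0)
          + (∑ i, ∑ j, r i * W i j * μ j * P (incQ n i))
          + (∑ i, ∑ j, if 0 < n i then
              r j * W j i * (1 - μ i) * P (incQ (decQ n i) j) else 0) := by
  have hr0 : ∀ i, r i ≠ 0 := fun i => (hr i).ne'
  have hl0 : ∀ i, lam i ≠ 0 := fun i => (hlam0 i).ne'
  have hcan : ∀ i, r i * (lam i / r i) = lam i := by
    intro i
    rw [mul_comm, div_mul_cancel₀ _ (hr0 i)]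
  -- increment lemma
  have key : ∀ (n : V → ℕ) (i : V), P (incQ n i) = (lam i / r i) * P n := by
    intro n i
    rw [hP, hP, ← Finset.mul_prod_erase Finset.univ _ (Finset.mem_univ i),
        ← Finset.mul_prod_erase Finset.univ _ (Finset.mem_univ i)]
    have h1 : ∀ j ∈ Finset.univ.erase i,
        (1 - lam j / r j) * (lam j / r j) ^ (incQ n i j)
          = (1 - lam j / r j) * (lam j / r j) ^ (n j) := by
      intro j hj
      rw [show incQ n i j = n j from by
        simp [incQ, Function.update_of_ne (Finset.mem_erase.1 hj).1]]
    rw [Finset.prod_congr rfl h1, show incQ n i i = n i + 1 from by simp [incQ],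
        pow_succ]
    ring
  have keydec : ∀ (n : V → ℕ) (i : V), 0 < n i →
      lam i * P (decQ n i) = r i * P n := by
    intro n i hi
    have h : incQ (decQ n i) i = n := by
      funext j
      by_cases hj : j = i
      · subst hj; simp only [incQ, decQ, Function.update_self]; omega
      · simp [incQ, decQ, Function.update_of_ne hj]
    have h2 := key (decQ n i) i
    rw [h] at h2
    rw [h2, ← mul_assoc, hcan]
  -- global identity
  have hsum : ∑ i, lam i * ∑ j, W i j * μ j = ∑ i, p i := by
    have h1 : ∑ i, lam i = ∑ i, p i + ∑ i, (1 - μ i) * ∑ j, lam j * W j i := by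
      rw [← Finset.sum_add_distrib]
      exact Finset.sum_congr rfl fun i _ => hlam i
    have h2 : ∑ i, (1 - μ i) * ∑ j, lam j * W j i
        = ∑ j, lam j * ∑ i, W j i * (1 - μ i) := by
      simp_rw [Finset.mul_sum]
      rw [Finset.sum_comm]
      apply Finset.sum_congr rfl
      intro j _
      apply Finset.sum_congr rfl
      intro i _
      ring
    have h3 : ∀ j, ∑ i, W j i * (1 - μ i) = 1 - ∑ i, W j i * μ i := by
      intro j
      have h4 : ∑ i, W j i * (1 - μ i) = (∑ i, W j i) - ∑ i, W j i * μ i := by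
        rw [← Finset.sum_sub_distrib]
        apply Finset.sum_congr rfl
        intro i _
        ring
      rw [h4, hW1 j]
    simp_rw [h2, h3, mul_sub, mul_one, Finset.sum_sub_distrib] at h1
    linarith [h1]
  intro n
  -- the middle double sum
  have hB : (∑ i, ∑ j, r i * W i j * μ j * P (incQ n i)) = (∑ i, p i) * P n := by
    have hBi : ∀ i, ∑ j, r i * W i j * μ j * P (incQ n i)
        = (lam i * ∑ j, W i j * μ j) * P n := by
      intro i
      rw [Finset.mul_sum, Finset.sum_mul]
      apply Finset.sum_congr rfl
      intro j _
      rw [key n i, show r i * W i j * μ j * (lam i / r i * P n)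
          = r i * (lam i / r i) * (W i j * μ j) * P n from by ring, hcan i]
    rw [Finset.sum_congr rfl fun i _ => hBi i, ← Finset.sum_mul, hsum]
  -- the last double sum, per index
  have hCi : ∀ i, (∑ j, if 0 < n i then
        r j * W j i * (1 - μ i) * P (incQ (decQ n i) j) else 0)
      = if 0 < n i then (1 - μ i) * (∑ j, lam j * W j i) * P (decQ n i) else 0 := by
    intro i
    by_cases hi : 0 < n i
    · simp only [if_pos hi]
      rw [Finset.mul_sum, Finset.sum_mul]
      apply Finset.sum_congr rfl
      intro j _
      rw [key (decQ n i) j, show r j * W j i * (1 - μ i) * (lam j / r j * P (decQ n i))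
          = r j * (lam j / r j) * (W j i * (1 - μ i)) * P (decQ n i) from by ring, hcan j]
      ring
    · simp [hi]
  rw [hB, Finset.sum_congr rfl fun i _ => hCi i]
  have hAC : (∑ i, if 0 < n i then p i * P (decQ n i) else 0)
      + (∑ i, if 0 < n i then (1 - μ i) * (∑ j, lam j * W j i) * P (decQ n i) else 0)
      = (∑ i ∈ Finset.univ.filter fun i => 0 < n i, r i) * P n := by
    rw [← Finset.sum_add_distrib, Finset.sum_mul, Finset.sum_filter]
    apply Finset.sum_congr rfl
    intro i _
    by_cases hi : 0 < n i
    · simp only [if_pos hi]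
      rw [← keydec n i hi, hlam i]
      ring
    · simp [hi]
  rw [add_mul]
  linarith [hAC]
end
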